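/- arXiv:2604.16660 — 3 statements merged into one kernel-verified Lean document; each statement's English description precedes it below -/
import Mathlib

section
/- Let X be a set. The set Fin^X of finite quivers on X (and hence also the set LF^X of locally finite quivers) is dense in AF^X with the weak topology. If X is infinite, then LF^X is not dense in AF^X with the strong topology (and therefore neither is Fin^X). -/
-- Mutation of a quiver at a vertex `x`.
open Classical in
noncomputable def mutateFun {X : Type*} (x : X) (Q : X → X → ℤ) : X → X → ℤ :=
  fun v w =>
    if v = x ∨ w = x then - Q v w
    else Q v w + Q v x * max (Q x w) 0 + max (- Q v x) 0 * Q x w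

-- Restriction of a quiver to a set of vertices `V`.
open Classical in
noncomputable def restrictFun {X : Type*} (V : Set X) (Q : X → X → ℤ) : X → X → ℤ :=
  fun a b => if a ∈ V ∧ b ∈ V then Q a b else 0

-- Overfill of a quiver on a set of vertices `V`.
open Classical in
noncomputable def overfillFun {X : Type*} (V : Set X) (Q : X → X → ℤ) : X → X → ℤ :=
  fun a b => if a ∈ V ∨ b ∈ V then Q a b else 0

/-- The set of arrow finite quivers on `X`: skew-symmetric integer matrices. -/
def AF (X : Type*) : Type _ := {Q : X → X → ℤ // ∀ a b, Q a b = - Q b a}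

/-- The basic set `U_{Q,V}`. -/
def Uset {X : Type*} (Q : AF X) (V : Set X) : Set (AF X) :=
  {Q' | restrictFun V Q'.1 = restrictFun V Q.1}

/-- The basic set `W_{Q,V}`. -/
def Wset {X : Type*} (Q : AF X) (V : Set X) : Set (AF X) :=
  {Q' | overfillFun V Q'.1 = overfillFun V Q.1}

def UBasis (X : Type*) : Set (Set (AF X)) :=
  {U | ∃ (Q : AF X) (V : Set X), V.Finite ∧ U = Uset Q V}

def WBasis (X : Type*) : Set (Set (AF X)) :=
  {U | ∃ (Q : AF X) (V : Set X), V.Finite ∧ U = Wset Q V}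

/-- The weak topology on `AF X`, generated by the sets `U_{Q,V}` with `V` finite. -/
def weakTop (X : Type*) : TopologicalSpace (AF X) :=
  TopologicalSpace.generateFrom (UBasis X)

/-- The strong topology on `AF X`, generated by the sets `W_{Q,V}` with `V` finite. -/
def strongTop (X : Type*) : TopologicalSpace (AF X) :=
  TopologicalSpace.generateFrom (WBasis X)

/-- Locally finite quivers. -/
def LFset (X : Type*) : Set (AF X) := {Q | ∀ x : X, {y : X | Q.1 x y ≠ 0}.Finite}

/-- Finite quivers: those with finite support. -/
def FinSet (X : Type*) : Set (AF X) := {Q | {x : X | ∃ y, Q.1 x y ≠ 0}.Finite}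

lemma restrictFun_eq_of_subset {X : Type*} {V W : Set X} (h : V ⊆ W)
    {A B : X → X → ℤ} (hAB : restrictFun W A = restrictFun W B) :
    restrictFun V A = restrictFun V B := by
  funext a b
  simp only [restrictFun]
  split_ifs with hab
  · have := congrFun (congrFun hAB a) b
    simpa [restrictFun, h hab.1, h hab.2] using this
  · rfl

lemma ubasis_isBasis (X : Type*) :
    @TopologicalSpace.IsTopologicalBasis (AF X) (weakTop X) (UBasis X) := by
  letI := weakTop X
  refine ⟨?_, ?_, rfl⟩
  · rintro t₁ ⟨Q₁, V₁, hV₁, rfl⟩ t₂ ⟨Q₂, V₂, hV₂, rfl⟩ P hP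
    refine ⟨Uset P (V₁ ∪ V₂), ⟨P, V₁ ∪ V₂, hV₁.union hV₂, rfl⟩, rfl, ?_⟩
    rintro Q' (h : restrictFun (V₁ ∪ V₂) Q'.1 = restrictFun (V₁ ∪ V₂) P.1)
    constructor
    · show restrictFun V₁ Q'.1 = restrictFun V₁ Q₁.1
      rw [restrictFun_eq_of_subset Set.subset_union_left h]
      exact hP.1
    · show restrictFun V₂ Q'.1 = restrictFun V₂ Q₂.1
      rw [restrictFun_eq_of_subset Set.subset_union_right h]
      exact hP.2
  · apply Set.eq_univ_of_forall
    intro P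
    exact ⟨Uset P ∅, ⟨P, ∅, Set.finite_empty, rfl⟩, rfl⟩

lemma finSet_subset_lfSet (X : Type*) : FinSet X ⊆ LFset X := by
  intro Q hQ x
  apply hQ.subset
  intro y hy
  exact ⟨x, by rw [Q.2 y x]; simpa using hy⟩

lemma notDense_fin_of_notDense_lf (X : Type*)
    (h : ¬ @Dense _ (strongTop X) (LFset X)) : ¬ @Dense _ (strongTop X) (FinSet X) := by
  letI := strongTop X
  exact fun hd => h (Dense.mono (finSet_subset_lfSet X) hd)

/-- `Fin^X` (hence `LF^X`) is dense in the weak topology; if `X` is infinite then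
`LF^X` (hence `Fin^X`) is not dense in the strong topology. -/
theorem fin_lf_density (X : Type*) :
    @Dense _ (weakTop X) (FinSet X) ∧
    @Dense _ (weakTop X) (LFset X) ∧
    (Infinite X →
      ¬ @Dense _ (strongTop X) (LFset X) ∧ ¬ @Dense _ (strongTop X) (FinSet X)) := by

  letI := weakTop X
  have hfin : Dense (FinSet X) := by
    rw [(ubasis_isBasis X).dense_iff]
    rintro o ⟨Q, V, hV, rfl⟩ ⟨P, hP⟩
    refine ⟨⟨restrictFun V P.1, ?_⟩, ?_, ?_⟩
    · intro a b
      simp only [restrictFun]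
      split_ifs with h1 h2 h2
      · exact P.2 a b
      · exact absurd ⟨h1.2, h1.1⟩ h2
      · exact absurd ⟨h2.2, h2.1⟩ h1
      · ring
    · show restrictFun V (restrictFun V P.1) = restrictFun V Q.1
      have : restrictFun V (restrictFun V P.1) = restrictFun V P.1 := by
        funext a b
        simp only [restrictFun]
        split_ifs <;> simp_all
      rw [this]; exact hP
    · show {x : X | ∃ y, restrictFun V P.1 x y ≠ 0}.Finite
      apply hV.subset
      rintro x ⟨y, hy⟩
      simp only [restrictFun] at hy
      by_contra hx
      simp [hx] at hy
  refine ⟨hfin, hfin.mono (finSet_subset_lfSet X), ?_⟩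
  intro hX
  have hLF : ¬ @Dense _ (strongTop X) (LFset X) := by
    letI := strongTop X
    classical
    intro hd
    set x₀ := Classical.arbitrary X
    set Q : AF X := ⟨fun a b => (if a = x₀ then (1 : ℤ) else 0) - (if b = x₀ then 1 else 0),
      fun a b => by ring⟩ with hQdef
    have hopen : IsOpen (Wset Q {x₀}) :=
      TopologicalSpace.GenerateOpen.basic _ ⟨Q, {x₀}, Set.finite_singleton x₀, rfl⟩
    have hne : (Wset Q {x₀}).Nonempty := ⟨Q, rfl⟩
    obtain ⟨Q', hQ'W, hQ'LF⟩ := dense_iff_inter_open.1 hd _ hopen hne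
    have heq : ∀ y, Q'.1 x₀ y = Q.1 x₀ y := by
      intro y
      have := congrFun (congrFun hQ'W x₀) y
      simpa [overfillFun] using this
    have hinf : {y : X | Q'.1 x₀ y ≠ 0}.Infinite := by
      apply ((Set.finite_singleton x₀).infinite_compl).mono
      intro y hy
      ·
        have : Q.1 x₀ y = 1 := by
          simp only [hQdef]
          simp [Set.mem_compl_iff, Set.mem_singleton_iff] at hy
          simp [hy]
        have hy' : y ≠ x₀ := by simpa using hy
        simp only [Set.mem_setOf_eq, heq y, hQdef, if_neg hy']
        simp
    exact hinf (hQ'LF x₀)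
  exact ⟨hLF, notDense_fin_of_notDense_lf X hLF⟩
end

section
/- There exists a continuous map f from the space ℤ^ℕ (functions ℕ → ℤ with the product topology, ℤ discrete) to AF^ℕ with the weak topology such that f⁻¹(LF^ℕ) equals the set {a : ℕ → ℤ : ∃ n, ∀ m ≥ n, a(m) = 0} of eventually-zero sequences. Moreover, LF^ℕ is not a Gδ subset (a countable intersection of open sets) of AF^ℕ with the weak topology. -/
/-! A star quiver whose central vertex has arrow multiplicities `a 0, a 1, …` depends
continuously on `a` and is locally finite exactly when `a` is eventually zero. So if `LF^ℕ` were
`Gδ`, the eventually zero sequences would form a `Gδ` subset of the Baire space `ℤ^ℕ`; but that set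
and its complement are both dense, and the complement is `Gδ`, so Baire's theorem would make the
empty intersection of the two dense. -/

open Set Filter Topology

theorem not_isGδ_of_dense_of_isGδ_compl {X : Type*} [TopologicalSpace X] [BaireSpace X]
    [Nonempty X] {s : Set X} (hs : Dense s) (hsc : Dense sᶜ) (hGδc : IsGδ sᶜ) : ¬ IsGδ s := by
  intro hGδ
  obtain ⟨x, hx, hxc⟩ := (hs.inter_of_Gδ hGδ hGδc hsc).nonempty
  exact hxc hx

def eventuallyZero (M : Type*) [Zero M] : Set (ℕ → M) := {a | ∃ n, ∀ m ≥ n, a m = 0}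

section EventuallyZero

theorem tendsto_truncate {M : Type*} [TopologicalSpace M] (a b : ℕ → M) :
    Tendsto (fun k m => if m < k then a m else b m) atTop (𝓝 a) := by
  refine tendsto_pi_nhds.2 fun m => tendsto_const_nhds.congr' ?_
  filter_upwards [eventually_gt_atTop m] with k hk
  simp [hk]

variable {M : Type*} [Zero M]

theorem mem_eventuallyZero_iff_finite {a : ℕ → M} :
    a ∈ eventuallyZero M ↔ {m | a m ≠ 0}.Finite := by
  change (∃ n, ∀ m ≥ n, a m = 0) ↔ _
  rw [← eventually_atTop, ← Nat.cofinite_eq_atTop, eventually_cofinite]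

variable [TopologicalSpace M]

theorem dense_eventuallyZero : Dense (eventuallyZero M) := fun a =>
  mem_closure_of_tendsto (tendsto_truncate a 0) <| .of_forall fun k =>
    ⟨k, fun m hm => by simp [not_lt.2 hm]⟩

theorem dense_compl_eventuallyZero [Nontrivial M] : Dense (eventuallyZero M)ᶜ := by
  obtain ⟨c, hc⟩ := exists_ne (0 : M)
  refine fun a => mem_closure_of_tendsto (tendsto_truncate a fun _ => c) <| .of_forall fun k => ?_
  rintro ⟨n, hn⟩
  exact hc (by simpa using hn (n + k) (by omega))

theorem isGδ_compl_eventuallyZero [T1Space M] : IsGδ (eventuallyZero M)ᶜ := by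
  have h : eventuallyZero M = ⋃ n, ⋂ m ≥ n, (fun a : ℕ → M => a m) ⁻¹' {0} := by
    ext a
    simp [eventuallyZero]
  rw [h, compl_iUnion]
  refine .iInter_of_isOpen fun n => (isClosed_biInter fun m _ => ?_).isOpen_compl
  exact isClosed_singleton.preimage (continuous_apply m)

theorem not_isGδ_eventuallyZero [T1Space M] [Nontrivial M] [BaireSpace (ℕ → M)] :
    ¬ IsGδ (eventuallyZero M) :=
  not_isGδ_of_dense_of_isGδ_compl dense_eventuallyZero dense_compl_eventuallyZero
    isGδ_compl_eventuallyZero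

end EventuallyZero

theorem mem_Uset_iff {X : Type*} {Q Q' : AF X} {V : Set X} :
    Q' ∈ Uset Q V ↔ ∀ x ∈ V, ∀ y ∈ V, Q'.1 x y = Q.1 x y := by
  simp only [Uset, mem_ofPred_eq, funext_iff, restrictFun]
  constructor
  · intro h x hx y hy
    simpa [hx, hy] using h x y
  · intro h x y
    split_ifs with hxy
    exacts [h x hxy.1 y hxy.2, rfl]

theorem continuous_weakTop_of_continuous_apply {α X : Type*} [TopologicalSpace α]
    {f : α → AF X} (hf : ∀ x y, Continuous fun a => (f a).1 x y) :
    @Continuous _ _ _ (weakTop X) f := by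
  rw [weakTop, continuous_generateFrom_iff]
  rintro _ ⟨Q, V, hV, rfl⟩
  have h : f ⁻¹' Uset Q V = ⋂ x ∈ V, ⋂ y ∈ V, (fun a => (f a).1 x y) ⁻¹' {Q.1 x y} := by
    ext a
    simp [mem_Uset_iff]
  rw [h]
  exact hV.isOpen_biInter fun x _ => hV.isOpen_biInter fun y _ =>
    (isOpen_discrete _).preimage (hf x y)

section StarQuiver

def starArm (a : ℕ → ℤ) : ℕ → ℤ
  | 0 => 0
  | m + 1 => a m

/-- The quiver with `a m` arrows from `0` to `m + 1` and no other arrows. -/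
noncomputable def starQuiver (a : ℕ → ℤ) : AF ℕ :=
  ⟨fun x y => (if x = 0 then starArm a y else 0) - (if y = 0 then starArm a x else 0),
    fun x y => by ring⟩

theorem starQuiver_zero_left (a : ℕ → ℤ) (y : ℕ) : (starQuiver a).1 0 y = starArm a y := by
  cases y <;> simp [starQuiver, starArm]

theorem starQuiver_of_ne_zero (a : ℕ → ℤ) {x y : ℕ} (hx : x ≠ 0) (hy : y ≠ 0) :
    (starQuiver a).1 x y = 0 := by
  simp [starQuiver, hx, hy]

theorem continuous_starQuiver_apply (x y : ℕ) : Continuous fun a => (starQuiver a).1 x y := by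
  have hArm : ∀ k, Continuous fun a => starArm a k
    | 0 => continuous_const
    | m + 1 => continuous_apply m
  simp only [starQuiver]
  split_ifs <;> fun_prop

theorem support_starArm (a : ℕ → ℤ) :
    {y | starArm a y ≠ 0} = Nat.succ '' {m | a m ≠ 0} := by
  ext (_ | m) <;> simp [starArm]

theorem starQuiver_mem_LFset_iff (a : ℕ → ℤ) :
    starQuiver a ∈ LFset ℕ ↔ {m | a m ≠ 0}.Finite := by
  have hRoot : {y | (starQuiver a).1 0 y ≠ 0}.Finite ↔ {m | a m ≠ 0}.Finite := by
    simp only [starQuiver_zero_left, support_starArm]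
    exact finite_image_iff Nat.succ_injective.injOn
  refine ⟨fun h => hRoot.1 (h 0), fun h x => ?_⟩
  rcases x with _ | x
  · exact hRoot.2 h
  · refine (finite_singleton 0).subset fun y hy => ?_
    by_contra hy0
    exact hy (starQuiver_of_ne_zero a x.succ_ne_zero hy0)

theorem preimage_starQuiver_LFset : starQuiver ⁻¹' LFset ℕ = eventuallyZero ℤ := by
  ext a
  rw [mem_preimage, starQuiver_mem_LFset_iff, mem_eventuallyZero_iff_finite]

end StarQuiver

/-- There is a continuous map `f : ℤ^ℕ → AF^ℕ` (weak topology) pulling back `LF^ℕ`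
to the set of eventually-zero sequences; moreover `LF^ℕ` is not Gδ in the weak topology. -/
theorem lf_sigma02_hard_not_gdelta :
    (∃ f : (ℕ → ℤ) → AF ℕ,
      @Continuous _ _ (@Pi.topologicalSpace ℕ (fun _ => ℤ) (fun _ => ⊥)) (weakTop ℕ) f ∧
      f ⁻¹' (LFset ℕ) = {a : ℕ → ℤ | ∃ n : ℕ, ∀ m ≥ n, a m = 0}) ∧
    ¬ @IsGδ (AF ℕ) (weakTop ℕ) (LFset ℕ) := by
  have hf : @Continuous _ _ _ (weakTop ℕ) starQuiver :=
    continuous_weakTop_of_continuous_apply continuous_starQuiver_apply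
  refine ⟨⟨starQuiver, hf, preimage_starQuiver_LFset⟩, fun hLF => ?_⟩
  have hE := @IsGδ.preimage _ _ _ (weakTop ℕ) _ _ hf hLF
  rw [preimage_starQuiver_LFset] at hE
  exact not_isGδ_eventuallyZero hE
end

section
/- Let P ⊆ AF^ℕ be invariant under isomorphism and hereditary, meaning Q ∈ P and V ⊆ ℕ finite imply ρ_V(Q) ∈ P, and suppose there exists a finite quiver T ∈ Fin with T ∉ P. Then: P ∩ LF is not dense in the space LF; P is not dense in the space AF; LF ∖ P is dense in LF; and AF ∖ P is dense in AF. Moreover, P is closed in AF if and only if there exists a family F of finite quivers such that P = {Q ∈ AF^ℕ : no member of F embeds into Q as a full subquiver}. -/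
/-- Restriction as a map `AF X → AF X`. -/
noncomputable def AF.restrict {X : Type*} (V : Set X) (Q : AF X) : AF X :=
  ⟨restrictFun V Q.1, by
    intro a b
    simp only [restrictFun]
    by_cases hab : a ∈ V ∧ b ∈ V
    · rw [if_pos hab, if_pos ⟨hab.2, hab.1⟩, Q.2 a b]
    · rw [if_neg hab, if_neg (fun hc => hab ⟨hc.2, hc.1⟩), neg_zero]⟩

/-- Two quivers on `X` are isomorphic if a relabeling of vertices carries one to the other. -/
def IsoAF {X : Type*} (Q Q' : AF X) : Prop :=
  ∃ f : X ≃ X, ∀ a b, Q'.1 (f a) (f b) = Q.1 a b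

/-- The space `LF`: locally finite quivers on `ℕ` as a subtype of `AF ℕ`. -/
abbrev LFsub := {Q : AF ℕ // Q ∈ LFset ℕ}

/-- The topology on `LF`: subspace topology inherited from the strong topology. -/
def LFtop : TopologicalSpace LFsub :=
  TopologicalSpace.induced (Subtype.val : LFsub → AF ℕ) (strongTop ℕ)

/-- A finite abstract quiver on `Fin n` embeds into `Q ∈ AF ℕ` as a full subquiver. -/
def EmbedsFin {n : ℕ} (T : AF (Fin n)) (Q : AF ℕ) : Prop :=
  ∃ f : Fin n → ℕ, Function.Injective f ∧ ∀ a b, Q.1 (f a) (f b) = T.1 a b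


section Aux
open Set Function TopologicalSpace

lemma mem_Uset {X : Type*} {Q' Q : AF X} {V : Set X} :
    Q' ∈ Uset Q V ↔ ∀ a b, a ∈ V → b ∈ V → Q'.1 a b = Q.1 a b := by
  constructor
  · intro h a b ha hb
    have := congrFun (congrFun h a) b
    simpa [restrictFun, ha, hb] using this
  · intro h
    funext a b
    by_cases hab : a ∈ V ∧ b ∈ V
    · simp [restrictFun, hab, h a b hab.1 hab.2]
    · simp [restrictFun, hab]

lemma mem_Wset {X : Type*} {Q' Q : AF X} {V : Set X} :
    Q' ∈ Wset Q V ↔ ∀ a b, (a ∈ V ∨ b ∈ V) → Q'.1 a b = Q.1 a b := by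
  constructor
  · intro h a b hab
    have := congrFun (congrFun h a) b
    simpa [overfillFun, hab] using this
  · intro h
    funext a b
    by_cases hab : a ∈ V ∨ b ∈ V
    · simp [overfillFun, hab, h a b hab]
    · simp [overfillFun, hab]

lemma ubasis_isBasis_s14 : @IsTopologicalBasis (AF ℕ) (weakTop ℕ) (UBasis ℕ) := by
  letI := weakTop ℕ
  refine ⟨?_, ?_, rfl⟩
  · rintro t₁ ⟨Q₁, V₁, hV₁, rfl⟩ t₂ ⟨Q₂, V₂, hV₂, rfl⟩ x ⟨hx₁, hx₂⟩
    refine ⟨Uset x (V₁ ∪ V₂), ⟨x, V₁ ∪ V₂, hV₁.union hV₂, rfl⟩, ?_, ?_⟩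
    · exact mem_Uset.mpr fun a b _ _ => rfl
    · intro Q' hQ'
      rw [mem_Uset] at hQ'
      constructor
      · exact mem_Uset.mpr fun a b ha hb => by
          rw [hQ' a b (Or.inl ha) (Or.inl hb)]; exact mem_Uset.mp hx₁ a b ha hb
      · exact mem_Uset.mpr fun a b ha hb => by
          rw [hQ' a b (Or.inr ha) (Or.inr hb)]; exact mem_Uset.mp hx₂ a b ha hb
  · apply Set.eq_univ_of_forall
    intro Q
    exact ⟨Uset Q ∅, ⟨Q, ∅, Set.finite_empty, rfl⟩, mem_Uset.mpr fun a b h => by simp at h⟩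

lemma wbasis_isBasis : @IsTopologicalBasis (AF ℕ) (strongTop ℕ) (WBasis ℕ) := by
  letI := strongTop ℕ
  refine ⟨?_, ?_, rfl⟩
  · rintro t₁ ⟨Q₁, V₁, hV₁, rfl⟩ t₂ ⟨Q₂, V₂, hV₂, rfl⟩ x ⟨hx₁, hx₂⟩
    refine ⟨Wset x (V₁ ∪ V₂), ⟨x, V₁ ∪ V₂, hV₁.union hV₂, rfl⟩, ?_, ?_⟩
    · exact mem_Wset.mpr fun a b _ => rfl
    · intro Q' hQ'
      rw [mem_Wset] at hQ'
      constructor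
      · exact mem_Wset.mpr fun a b hab => by
          rw [hQ' a b (hab.imp Or.inl Or.inl)]; exact mem_Wset.mp hx₁ a b hab
      · exact mem_Wset.mpr fun a b hab => by
          rw [hQ' a b (hab.imp Or.inr Or.inr)]; exact mem_Wset.mp hx₂ a b hab
  · apply Set.eq_univ_of_forall
    intro Q
    exact ⟨Wset Q ∅, ⟨Q, ∅, Set.finite_empty, rfl⟩, mem_Wset.mpr fun a b h => by simp at h⟩

lemma lf_isBasis :
    @IsTopologicalBasis LFsub LFtop (Set.preimage (Subtype.val : LFsub → AF ℕ) '' WBasis ℕ) := by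
  letI := strongTop ℕ
  letI := LFtop
  exact wbasis_isBasis.isInducing ⟨rfl⟩

lemma exists_perm_extend {A : Set ℕ} (hA : A.Finite) {h : ℕ → ℕ} (hinj : Set.InjOn h A) :
    ∃ σ : ℕ ≃ ℕ, ∀ a ∈ A, σ a = h a := by
  classical
  have hB : (h '' A).Finite := hA.image h
  have hAc : Infinite ↥(Aᶜ) := Set.infinite_coe_iff.mpr hA.infinite_compl
  have hBc : Infinite ↥((h '' A)ᶜ) := Set.infinite_coe_iff.mpr hB.infinite_compl
  obtain ⟨dA⟩ := nonempty_denumerable ↥(Aᶜ)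
  obtain ⟨dB⟩ := nonempty_denumerable ↥((h '' A)ᶜ)
  let eC : ↥(Aᶜ) ≃ ↥((h '' A)ᶜ) := (@Denumerable.eqv _ dA).trans (@Denumerable.eqv _ dB).symm
  let e1 : ↥A ≃ ↥(h '' A) := Set.BijOn.equiv h hinj.bijOn_image
  refine ⟨(Equiv.Set.sumCompl A).symm.trans ((e1.sumCongr eC).trans
    (Equiv.Set.sumCompl (h '' A))), ?_⟩
  intro a ha
  simp only [Equiv.trans_apply, Equiv.Set.sumCompl_symm_apply_of_mem ha, Equiv.sumCongr_apply,
    Sum.map_inl, Equiv.Set.sumCompl_apply_inl]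
  rfl

end Aux


section Aux2
open Set Function TopologicalSpace

/-- The support of a quiver. -/
def suppAF (Q : AF ℕ) : Set ℕ := {x | ∃ y, Q.1 x y ≠ 0}

lemma mem_supp_left {Q : AF ℕ} {a b : ℕ} (h : Q.1 a b ≠ 0) : a ∈ suppAF Q := ⟨b, h⟩

lemma mem_supp_right {Q : AF ℕ} {a b : ℕ} (h : Q.1 a b ≠ 0) : b ∈ suppAF Q :=
  ⟨a, by rw [Q.2]; simpa using h⟩

lemma zero_of_not_mem_supp {Q : AF ℕ} {a b : ℕ} (h : a ∉ suppAF Q ∨ b ∉ suppAF Q) :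
    Q.1 a b = 0 := by
  by_contra hc
  rcases h with h | h
  · exact h (mem_supp_left hc)
  · exact h (mem_supp_right hc)

lemma restrict_supp_self (Q : AF ℕ) : AF.restrict (suppAF Q) Q = Q := by
  apply Subtype.ext
  funext a b
  show restrictFun _ _ _ _ = _
  by_cases hab : a ∈ suppAF Q ∧ b ∈ suppAF Q
  · simp [restrictFun, hab]
  · rw [not_and_or] at hab
    simp [restrictFun, zero_of_not_mem_supp hab]

-- Mix along U-condition.
open Classical in
noncomputable def mixU (V : Set ℕ) (Q T' : AF ℕ) : AF ℕ :=
  ⟨fun a b => if a ∈ V ∧ b ∈ V then Q.1 a b else T'.1 a b, by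
    intro a b
    show (if a ∈ V ∧ b ∈ V then Q.1 a b else T'.1 a b)
      = -(if b ∈ V ∧ a ∈ V then Q.1 b a else T'.1 b a)
    by_cases hab : a ∈ V ∧ b ∈ V
    · rw [if_pos hab, if_pos ⟨hab.2, hab.1⟩, Q.2]
    · rw [if_neg hab, if_neg (fun hc => hab ⟨hc.2, hc.1⟩), T'.2]⟩

-- Mix along W-condition.
open Classical in
noncomputable def mixW (V : Set ℕ) (Q T' : AF ℕ) : AF ℕ :=
  ⟨fun a b => if a ∈ V ∨ b ∈ V then Q.1 a b else T'.1 a b, by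
    intro a b
    show (if a ∈ V ∨ b ∈ V then Q.1 a b else T'.1 a b)
      = -(if b ∈ V ∨ a ∈ V then Q.1 b a else T'.1 b a)
    by_cases hab : a ∈ V ∨ b ∈ V
    · rw [if_pos hab, if_pos hab.symm, Q.2]
    · rw [if_neg hab, if_neg (fun hc => hab hc.symm), T'.2]⟩

/-- Given a finite quiver `T` not in `P` and a finite set `V`, produce a copy of `T`
(not in `P`) supported away from `V`. -/
lemma exists_bad_copy (P : Set (AF ℕ))
    (hinv : ∀ Q Q' : AF ℕ, IsoAF Q Q' → (Q ∈ P ↔ Q' ∈ P))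
    {T : AF ℕ} (hT : T ∈ FinSet ℕ) (hTP : T ∉ P) {V : Set ℕ} (hV : V.Finite) :
    ∃ T' : AF ℕ, T' ∉ P ∧ (suppAF T').Finite ∧ (∀ x ∈ suppAF T', x ∉ V) := by
  classical
  obtain ⟨m, hm⟩ : ∃ m : ℕ, ∀ v ∈ V, v ≤ m := by
    obtain ⟨m, hm⟩ := hV.bddAbove
    exact ⟨m, fun v hv => hm hv⟩
  have hS : (suppAF T).Finite := hT
  obtain ⟨σ, hσ⟩ := exists_perm_extend hS (h := fun x => x + m + 1)
    (fun x _ y _ hxy => by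
      have : x + m + 1 = y + m + 1 := hxy
      omega)
  refine ⟨⟨fun a b => T.1 (σ.symm a) (σ.symm b), fun a b => T.2 _ _⟩, ?_, ?_, ?_⟩
  · intro hc
    exact hTP ((hinv T _ ⟨σ, fun a b => by simp⟩).mpr hc)
  · have : suppAF ⟨fun a b => T.1 (σ.symm a) (σ.symm b), fun a b => T.2 _ _⟩ ⊆
        σ '' suppAF T := by
      rintro x ⟨y, hy⟩
      exact ⟨σ.symm x, ⟨σ.symm y, hy⟩, by simp⟩
    exact (hS.image σ).subset this
  · rintro x ⟨y, hy⟩ hxV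
    have hx : σ.symm x ∈ suppAF T := ⟨σ.symm y, hy⟩
    have h2 : x = σ.symm x + m + 1 := by
      conv_lhs => rw [← Equiv.apply_symm_apply σ x]
      exact hσ _ hx
    have h3 := hm x hxV
    omega

/-- Any two full copies of the same abstract finite quiver are isomorphic. -/
lemma copies_iso {n : ℕ} (T : AF (Fin n)) (C C' : AF ℕ)
    {f g : Fin n → ℕ} (hf : Function.Injective f) (hg : Function.Injective g)
    (hCf : ∀ a b, C.1 (f a) (f b) = T.1 a b) (hCsupp : ∀ x ∈ suppAF C, x ∈ Set.range f)
    (hCg : ∀ a b, C'.1 (g a) (g b) = T.1 a b) (hCsupp' : ∀ x ∈ suppAF C', x ∈ Set.range g) :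
    IsoAF C C' := by
  classical
  set h : ℕ → ℕ := fun x => if hx : ∃ a, f a = x then g hx.choose else x with hh
  have hhf : ∀ a, h (f a) = g a := by
    intro a
    have hx : ∃ a', f a' = f a := ⟨a, rfl⟩
    have : hx.choose = a := hf hx.choose_spec
    simp [hh, dif_pos hx, this]
  obtain ⟨σ, hσ⟩ := exists_perm_extend (Set.finite_range f)
    (h := h) (by
      rintro x ⟨a, rfl⟩ y ⟨b, rfl⟩ hxy
      rw [hhf, hhf] at hxy
      rw [hg hxy])
  have hσf : ∀ a, σ (f a) = g a := fun a => by rw [hσ _ ⟨a, rfl⟩, hhf]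
  refine ⟨σ, fun x y => ?_⟩
  by_cases hx : ∃ a, f a = x
  · obtain ⟨a, rfl⟩ := hx
    by_cases hy : ∃ b, f b = y
    · obtain ⟨b, rfl⟩ := hy
      rw [hσf, hσf, hCg, hCf]
    · have h1 : C.1 (f a) y = 0 := by
        by_contra hc
        exact hy (hCsupp y (mem_supp_right hc))
      have h2 : C'.1 (σ (f a)) (σ y) = 0 := by
        by_contra hc
        obtain ⟨b, hb⟩ := hCsupp' _ (mem_supp_right hc)
        exact hy ⟨b, σ.injective ((hσf b).trans hb)⟩
      rw [h1, h2]
  · have h1 : C.1 x y = 0 := by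
      by_contra hc
      exact hx (hCsupp x (mem_supp_left hc))
    have h2 : C'.1 (σ x) (σ y) = 0 := by
      by_contra hc
      obtain ⟨b, hb⟩ := hCsupp' _ (mem_supp_left hc)
      exact hx ⟨b, σ.injective ((hσf b).trans hb)⟩
    rw [h1, h2]

end Aux2


section Aux3
open Set Function TopologicalSpace

lemma mixU_pos {V : Set ℕ} {Q T' : AF ℕ} {a b : ℕ} (h : a ∈ V ∧ b ∈ V) :
    (mixU V Q T').1 a b = Q.1 a b := by
  simp only [mixU]; rw [if_pos h]

lemma mixU_neg {V : Set ℕ} {Q T' : AF ℕ} {a b : ℕ} (h : ¬(a ∈ V ∧ b ∈ V)) :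
    (mixU V Q T').1 a b = T'.1 a b := by
  simp only [mixU]; rw [if_neg h]

lemma mixW_pos {V : Set ℕ} {Q T' : AF ℕ} {a b : ℕ} (h : a ∈ V ∨ b ∈ V) :
    (mixW V Q T').1 a b = Q.1 a b := by
  simp only [mixW]; rw [if_pos h]

lemma mixW_neg {V : Set ℕ} {Q T' : AF ℕ} {a b : ℕ} (h : ¬(a ∈ V ∨ b ∈ V)) :
    (mixW V Q T').1 a b = T'.1 a b := by
  simp only [mixW]; rw [if_neg h]

lemma restrict_mixU {V : Set ℕ} {Q T' : AF ℕ} (hdisj : ∀ x ∈ suppAF T', x ∉ V) :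
    AF.restrict (suppAF T') (mixU V Q T') = T' := by
  apply Subtype.ext
  funext a b
  show restrictFun _ _ a b = T'.1 a b
  by_cases hab : a ∈ suppAF T' ∧ b ∈ suppAF T'
  · simp only [restrictFun]
    rw [if_pos hab]
    exact mixU_neg (fun hc => hdisj a hab.1 hc.1)
  · simp only [restrictFun]
    rw [if_neg hab]
    exact (zero_of_not_mem_supp (not_and_or.mp hab)).symm

lemma restrict_mixW {V : Set ℕ} {Q T' : AF ℕ} (hdisj : ∀ x ∈ suppAF T', x ∉ V) :
    AF.restrict (suppAF T') (mixW V Q T') = T' := by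
  apply Subtype.ext
  funext a b
  show restrictFun _ _ a b = T'.1 a b
  by_cases hab : a ∈ suppAF T' ∧ b ∈ suppAF T'
  · simp only [restrictFun]
    rw [if_pos hab]
    exact mixW_neg (fun hc => hc.elim (hdisj a hab.1) (hdisj b hab.2))
  · simp only [restrictFun]
    rw [if_neg hab]
    exact (zero_of_not_mem_supp (not_and_or.mp hab)).symm

lemma mixW_lf {V : Set ℕ} {Q₀ T' : AF ℕ} (hQ₀ : Q₀ ∈ LFset ℕ) (hT' : (suppAF T').Finite) :
    mixW V Q₀ T' ∈ LFset ℕ := by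
  intro x
  apply ((hQ₀ x).union hT').subset
  intro y hy
  by_cases hxy : x ∈ V ∨ y ∈ V
  · left
    have hy' : (mixW V Q₀ T').1 x y ≠ 0 := hy
    rw [mixW_pos hxy] at hy'
    exact hy'
  · right
    have hy' : (mixW V Q₀ T').1 x y ≠ 0 := hy
    rw [mixW_neg hxy] at hy'
    exact mem_supp_right hy'

/-- A quiver on ℕ is a full copy of an abstract quiver on `Fin n`. -/
def IsCopy {n : ℕ} (T : AF (Fin n)) (C : AF ℕ) : Prop :=
  ∃ f : Fin n → ℕ, Function.Injective f ∧ (∀ a b, C.1 (f a) (f b) = T.1 a b) ∧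
    ∀ x ∈ suppAF C, x ∈ Set.range f

end Aux3

/-- Hereditary meta-theorem: if `P` is an isomorphism-invariant, hereditary property of
arrow finite quivers missing at least one finite quiver, then `P` is non-dense in both `LF`
and `AF` with dense complement in both; moreover `P` is closed in `AF` iff `P` is exactly
the property of avoiding some family of finite quivers. -/
theorem hereditary_meta_theorem (P : Set (AF ℕ))
    (hinv : ∀ Q Q' : AF ℕ, IsoAF Q Q' → (Q ∈ P ↔ Q' ∈ P))
    (hher : ∀ Q ∈ P, ∀ V : Set ℕ, V.Finite → AF.restrict V Q ∈ P)
    (hmiss : ∃ T ∈ FinSet ℕ, T ∉ P) :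
    ¬ @Dense _ LFtop {Q : LFsub | Q.1 ∈ P} ∧
    ¬ @Dense _ (weakTop ℕ) P ∧
    @Dense _ LFtop {Q : LFsub | Q.1 ∉ P} ∧
    @Dense _ (weakTop ℕ) Pᶜ ∧
    (@IsClosed _ (weakTop ℕ) P ↔
      ∃ F : Set (Σ n : ℕ, AF (Fin n)),
        P = {Q : AF ℕ | ∀ T ∈ F, ¬ EmbedsFin T.2 Q}) := by
  classical
  obtain ⟨T, hTfin, hTP⟩ := hmiss
  have hS : (suppAF T).Finite := hTfin
  have hTLF : T ∈ LFset ℕ := fun x => hS.subset (fun y hy => mem_supp_right hy)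
  have hUdisj : ∀ Q' ∈ Uset T (suppAF T), Q' ∉ P := by
    intro Q' hQ' hQP
    have h1 : AF.restrict (suppAF T) Q' = T := by
      have h2 : AF.restrict (suppAF T) Q' = AF.restrict (suppAF T) T := Subtype.ext hQ'
      rw [h2, restrict_supp_self]
    exact hTP (h1 ▸ hher Q' hQP _ hS)
  have hWsubU : Wset T (suppAF T) ⊆ Uset T (suppAF T) := fun Q' h =>
    mem_Uset.mpr fun a b ha _ => mem_Wset.mp h a b (Or.inl ha)
  refine ⟨?_, ?_, ?_, ?_, ?_⟩
  · -- P ∩ LF not dense in LF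
    letI := strongTop ℕ
    letI := LFtop
    intro hd
    have hop : IsOpen (Wset T (suppAF T)) :=
      TopologicalSpace.GenerateOpen.basic _ ⟨T, suppAF T, hS, rfl⟩
    have hcont : Continuous (Subtype.val : LFsub → AF ℕ) := continuous_induced_dom
    have hopen : IsOpen (Subtype.val ⁻¹' Wset T (suppAF T)) := hop.preimage hcont
    obtain ⟨Q', hQ'⟩ := dense_iff_inter_open.mp hd _ hopen
      ⟨⟨T, hTLF⟩, mem_Wset.mpr fun _ _ _ => rfl⟩
    exact hUdisj Q'.1 (hWsubU hQ'.1) hQ'.2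
  · -- P not dense in AF
    letI := weakTop ℕ
    intro hd
    have hopen : IsOpen (Uset T (suppAF T)) :=
      TopologicalSpace.GenerateOpen.basic _ ⟨T, suppAF T, hS, rfl⟩
    obtain ⟨Q', hQ'⟩ := dense_iff_inter_open.mp hd _ hopen
      ⟨T, mem_Uset.mpr fun _ _ _ _ => rfl⟩
    exact hUdisj Q' hQ'.1 hQ'.2
  · -- LF \ P dense in LF
    letI := strongTop ℕ
    letI := LFtop
    rw [lf_isBasis.dense_iff]
    rintro o ⟨W, ⟨Q, V, hV, rfl⟩, rfl⟩ ⟨⟨Q₀, hQ₀LF⟩, hQ₀⟩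
    obtain ⟨T', hT'P, hT'fin, hT'disj⟩ := exists_bad_copy P hinv hTfin hTP hV
    have hQ''W : mixW V Q₀ T' ∈ Wset Q V := mem_Wset.mpr fun a b hab => by
      rw [mixW_pos hab]
      exact mem_Wset.mp hQ₀ a b hab
    have hQ''P : mixW V Q₀ T' ∉ P := by
      intro hc
      have h3 := hher _ hc (suppAF T') hT'fin
      rw [restrict_mixW hT'disj] at h3
      exact hT'P h3
    exact ⟨⟨mixW V Q₀ T', mixW_lf hQ₀LF hT'fin⟩, hQ''W, hQ''P⟩
  · -- Pᶜ dense in AF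
    letI := weakTop ℕ
    rw [ubasis_isBasis_s14.dense_iff]
    rintro o ⟨Q, V, hV, rfl⟩ -
    obtain ⟨T', hT'P, hT'fin, hT'disj⟩ := exists_bad_copy P hinv hTfin hTP hV
    refine ⟨mixU V Q T', mem_Uset.mpr fun a b ha hb => mixU_pos ⟨ha, hb⟩, ?_⟩
    intro hc
    have h3 := hher _ hc (suppAF T') hT'fin
    rw [restrict_mixU hT'disj] at h3
    exact hT'P h3
  · -- closedness characterization
    letI := weakTop ℕ
    constructor
    · intro hcl
      refine ⟨{s : Σ n : ℕ, AF (Fin n) | ∃ C, IsCopy s.2 C ∧ C ∉ P}, ?_⟩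
      ext Q
      constructor
      · rintro hQP s ⟨C, ⟨f, hf, hCval, hCsupp⟩, hCP⟩ ⟨g, hg, hgval⟩
        have hC'P : AF.restrict (Set.range g) Q ∈ P := hher Q hQP _ (Set.finite_range g)
        have hC'val : ∀ a b, (AF.restrict (Set.range g) Q).1 (g a) (g b) = s.2.1 a b := by
          intro a b
          show restrictFun _ _ _ _ = _
          simp only [restrictFun]
          rw [if_pos ⟨⟨a, rfl⟩, ⟨b, rfl⟩⟩]
          exact hgval a b
        have hC'supp : ∀ x ∈ suppAF (AF.restrict (Set.range g) Q), x ∈ Set.range g := by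
          rintro x ⟨y, hy⟩
          by_contra hx
          apply hy
          show restrictFun _ _ _ _ = 0
          simp only [restrictFun]
          rw [if_neg (fun hc => hx hc.1)]
        have hiso : IsoAF C (AF.restrict (Set.range g) Q) :=
          copies_iso s.2 _ _ hf hg hCval hCsupp hC'val hC'supp
        exact hCP ((hinv _ _ hiso).mpr hC'P)
      · intro hQ
        have hcls : Q ∈ closure P := by
          rw [ubasis_isBasis_s14.mem_closure_iff]
          rintro o ⟨Q₀, V, hV, rfl⟩ hQo
          obtain ⟨n, e, he⟩ := hV.fin_embedding
          set Tn : AF (Fin n) := ⟨fun a b => Q.1 (e a) (e b), fun a b => Q.2 _ _⟩ with hTn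
          have hnotF : ¬ ∃ C, IsCopy Tn C ∧ C ∉ P := by
            intro hmem
            exact hQ ⟨n, Tn⟩ hmem ⟨e, e.injective, fun a b => rfl⟩
          push_neg at hnotF
          have hcopy : IsCopy Tn (AF.restrict V Q) := by
            refine ⟨e, e.injective, ?_, ?_⟩
            · intro a b
              show restrictFun _ _ _ _ = _
              simp only [restrictFun]
              rw [if_pos ⟨he ▸ ⟨a, rfl⟩, he ▸ ⟨b, rfl⟩⟩]
            · rintro x ⟨y, hy⟩
              by_contra hx
              apply hy
              show restrictFun _ _ _ _ = 0
              simp only [restrictFun]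
              rw [if_neg (fun hc => hx (he ▸ hc.1))]
          refine ⟨AF.restrict V Q, ?_, hnotF _ hcopy⟩
          apply mem_Uset.mpr
          intro a b ha hb
          have h4 : (AF.restrict V Q).1 a b = Q.1 a b := by
            show restrictFun _ _ _ _ = _
            simp only [restrictFun]
            rw [if_pos ⟨ha, hb⟩]
          rw [h4]
          exact mem_Uset.mp hQo a b ha hb
        rwa [hcl.closure_eq] at hcls
    · rintro ⟨F, rfl⟩
      rw [← isOpen_compl_iff]
      rw [ubasis_isBasis_s14.isOpen_iff]
      intro Q hQ
      have hQ' : ¬ ∀ s ∈ F, ¬ EmbedsFin (Sigma.snd s) Q := hQ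
      push_neg at hQ'
      obtain ⟨s, hsF, f, hf, hval⟩ := hQ'
      refine ⟨Uset Q (Set.range f), ⟨Q, Set.range f, Set.finite_range f, rfl⟩,
        mem_Uset.mpr fun _ _ _ _ => rfl, ?_⟩
      intro Q' hQ'mem hall
      exact hall s hsF ⟨f, hf, fun a b => by
        rw [mem_Uset.mp hQ'mem (f a) (f b) ⟨a, rfl⟩ ⟨b, rfl⟩]
        exact hval a b⟩
end
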